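/- arXiv:2205.09390 — 7 statements merged into one kernel-verified Lean document; each statement's English description precedes it below -/
import Mathlib

section
/- For any two real matrices A, B of the same size m×n, the trace of AᵀB is at most the sum over i of σᵢ(A)·σᵢ(B), where σᵢ(A) and σᵢ(B) are the singular values of A and B arranged in non-increasing order. -/
open Matrix Finset

def padM {m n : ℕ} (M : Matrix (Fin m) (Fin n) ℝ) (i j : ℕ) : ℝ :=
  if h : i < m ∧ j < n then M ⟨i, h.1⟩ ⟨j, h.2⟩ else 0

lemma padM_apply {m n : ℕ} (M : Matrix (Fin m) (Fin n) ℝ) (i : Fin m) (j : Fin n) :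
    padM M i j = M i j := by simp [padM]

lemma padM_transpose {m n : ℕ} (M : Matrix (Fin m) (Fin n) ℝ) (i j : ℕ) :
    padM Mᵀ i j = padM M j i := by
  unfold padM; split_ifs with h1 h2 h2 <;> first | rfl | omega

lemma pad_row_sq_le {d : ℕ} (W : Matrix (Fin d) (Fin d) ℝ) (hW : W * Wᵀ = 1) (i t : ℕ) :
    ∑ k ∈ range t, (padM W i k)^2 ≤ 1 := by
  rcases lt_or_ge i d with hi | hi
  · calc ∑ k ∈ range t, (padM W i k)^2
        = ∑ k ∈ (range t).filter (· < d), (padM W i k)^2 := by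
          refine (Finset.sum_filter_of_ne fun x _ hx => ?_).symm
          by_contra h
          refine hx ?_
          unfold padM
          rw [dif_neg (by omega)]
          simp
      _ ≤ ∑ k ∈ range d, (padM W i k)^2 := by
          refine Finset.sum_le_sum_of_subset_of_nonneg ?_ (fun _ _ _ => sq_nonneg _)
          intro x hx; simp at hx ⊢; exact hx.2
      _ = ∑ k : Fin d, (W ⟨i,hi⟩ k)^2 := by
          rw [← Fin.sum_univ_eq_sum_range (fun k => (padM W i k)^2) d]
          exact Finset.sum_congr rfl fun k _ => by simp [padM, hi]
      _ = (W * Wᵀ) ⟨i,hi⟩ ⟨i,hi⟩ := by simp [Matrix.mul_apply, sq]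
      _ = 1 := by rw [hW]; simp [Matrix.one_apply]
  · have : ∀ k, padM W i k = 0 := fun k => by unfold padM; rw [dif_neg]; omega
    simp [this]

lemma pad_col_sq_le {d : ℕ} (W : Matrix (Fin d) (Fin d) ℝ) (hW : W * Wᵀ = 1) (k t : ℕ) :
    ∑ i ∈ range t, (padM W i k)^2 ≤ 1 := by
  have hWt : Wᵀ * Wᵀᵀ = 1 := by rw [transpose_transpose]; exact mul_eq_one_comm.mp hW
  simpa [padM_transpose] using pad_row_sq_le Wᵀ hWt k t

lemma pad_rect_sq_le {d : ℕ} (W : Matrix (Fin d) (Fin d) ℝ) (hW : W * Wᵀ = 1) (a b : ℕ) :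
    ∑ i ∈ range a, ∑ k ∈ range b, (padM W i k)^2 ≤ (min a b : ℕ) := by
  rw [Nat.cast_min]
  refine le_min ?_ ?_
  · calc ∑ i ∈ range a, ∑ k ∈ range b, (padM W i k)^2
        ≤ ∑ i ∈ range a, 1 := Finset.sum_le_sum fun i _ => pad_row_sq_le W hW i b
      _ = a := by simp
  · rw [Finset.sum_comm]
    calc ∑ k ∈ range b, ∑ i ∈ range a, (padM W i k)^2
        ≤ ∑ k ∈ range b, 1 := Finset.sum_le_sum fun k _ => pad_col_sq_le W hW k a
      _ = b := by simp

lemma cs_bound {m n : ℕ} (U : Matrix (Fin m) (Fin m) ℝ) (V : Matrix (Fin n) (Fin n) ℝ)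
    (hU : U * Uᵀ = 1) (hV : V * Vᵀ = 1) (a b : ℕ) :
    ∑ i ∈ range a, ∑ k ∈ range b, padM U i k * padM V i k ≤ (min a b : ℕ) := by
  set S := ∑ i ∈ range a, ∑ k ∈ range b, padM U i k * padM V i k with hS
  have key : S^2 ≤ ((min a b : ℕ) : ℝ) * ((min a b : ℕ) : ℝ) := by
    have h1 : S = ∑ x ∈ range a ×ˢ range b, padM U x.1 x.2 * padM V x.1 x.2 := by
      rw [Finset.sum_product' (range a) (range b) (fun i k => padM U i k * padM V i k)]
    have h2 := Finset.sum_mul_sq_le_sq_mul_sq (range a ×ˢ range b)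
      (fun x => padM U x.1 x.2) (fun x => padM V x.1 x.2)
    rw [← h1] at h2
    have hU2 : ∑ x ∈ range a ×ˢ range b, (padM U x.1 x.2)^2 ≤ ((min a b : ℕ) : ℝ) := by
      rw [Finset.sum_product' (range a) (range b) (fun i k => (padM U i k)^2)]
      exact pad_rect_sq_le U hU a b
    have hV2 : ∑ x ∈ range a ×ˢ range b, (padM V x.1 x.2)^2 ≤ ((min a b : ℕ) : ℝ) := by
      rw [Finset.sum_product' (range a) (range b) (fun i k => (padM V i k)^2)]
      exact pad_rect_sq_le V hV a b
    have hU0 : (0:ℝ) ≤ ∑ x ∈ range a ×ˢ range b, (padM U x.1 x.2)^2 :=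
      Finset.sum_nonneg fun _ _ => sq_nonneg _
    have hV0 : (0:ℝ) ≤ ∑ x ∈ range a ×ˢ range b, (padM V x.1 x.2)^2 :=
      Finset.sum_nonneg fun _ _ => sq_nonneg _
    nlinarith
  nlinarith [Nat.cast_nonneg (α := ℝ) (min a b)]

lemma mid_apply {m n : ℕ} (U : Matrix (Fin m) (Fin m) ℝ) (V : Matrix (Fin n) (Fin n) ℝ)
    (s : ℕ → ℝ) (i : Fin m) (j : Fin n) :
    (U * (Matrix.of fun (k : Fin m) (l : Fin n) =>
      if (k : ℕ) = (l : ℕ) then s (k : ℕ) else 0) * Vᵀ) i j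
    = ∑ k ∈ range (min m n), s k * (padM U ↑i k * padM V ↑j k) := by
  simp only [Matrix.mul_apply, Matrix.transpose_apply, Matrix.of_apply, Finset.sum_mul,
    Finset.mul_sum]
  rw [Finset.sum_comm]
  have step1 : ∀ k : Fin m, ∑ l : Fin n, U i k * (if (k:ℕ) = (l:ℕ) then s (k:ℕ) else 0) * V j l
      = (if (k:ℕ) < n then s (k:ℕ) * (padM U ↑i ↑k * padM V ↑j ↑k) else 0) := by
    intro k
    have h1 : ∀ l : Fin n, U i k * (if (k:ℕ) = (l:ℕ) then s (k:ℕ) else 0) * V j l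
        = (fun c : ℕ => if (k:ℕ) = c then s (k:ℕ) * (padM U ↑i ↑k * padM V ↑j c) else 0) ↑l := by
      intro l
      simp only
      by_cases h : (k:ℕ) = (l:ℕ)
      · rw [if_pos h, if_pos h, padM_apply, padM_apply]; ring
      · rw [if_neg h, if_neg h]; ring
    simp_rw [h1]
    refine Eq.trans (Fin.sum_univ_eq_sum_range
      (fun c : ℕ => if (k:ℕ) = c then s (k:ℕ) * (padM U ↑i ↑k * padM V ↑j c) else 0) n) ?_
    rw [Finset.sum_ite_eq (range n) (k:ℕ) (fun c => s (k:ℕ) * (padM U ↑i ↑k * padM V ↑j c))]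
    simp [Finset.mem_range]
  simp_rw [step1]
  refine Eq.trans (Fin.sum_univ_eq_sum_range
    (fun c : ℕ => if c < n then s c * (padM U ↑i c * padM V ↑j c) else 0) m) ?_
  have hsub : range (min m n) ⊆ range m := Finset.range_subset_range.2 (Nat.min_le_left m n)
  rw [← Finset.sum_subset hsub (fun x hx hx' => by rw [if_neg]; simp at hx hx'; omega)]
  exact Finset.sum_congr rfl fun x hx => by rw [if_pos]; simp at hx; omega

lemma trace_diag_mul {m n : ℕ} (s : ℕ → ℝ) (M : Matrix (Fin m) (Fin n) ℝ) :
    Matrix.trace ((Matrix.of fun (i : Fin m) (j : Fin n) =>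
      if (i : ℕ) = (j : ℕ) then s (i : ℕ) else 0)ᵀ * M)
    = ∑ c ∈ range (min m n), s c * padM M c c := by
  simp only [Matrix.trace, Matrix.diag, Matrix.mul_apply, Matrix.transpose_apply,
    Matrix.of_apply]
  have step1 : ∀ j : Fin n, ∑ i : Fin m, (if (i:ℕ) = (j:ℕ) then s (i:ℕ) else 0) * M i j
      = (if (j:ℕ) < m then s (j:ℕ) * padM M ↑j ↑j else 0) := by
    intro j
    have h1 : ∀ i : Fin m, (if (i:ℕ) = (j:ℕ) then s (i:ℕ) else 0) * M i j
        = (fun c : ℕ => if c = (j:ℕ) then s c * padM M c ↑j else 0) ↑i := by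
      intro i
      simp only
      by_cases h : (i:ℕ) = (j:ℕ)
      · rw [if_pos h, if_pos h, padM_apply]
      · rw [if_neg h, if_neg h, zero_mul]
    simp_rw [h1]
    refine Eq.trans (Fin.sum_univ_eq_sum_range
      (fun c : ℕ => if c = (j:ℕ) then s c * padM M c ↑j else 0) m) ?_
    rw [Finset.sum_ite_eq' (range m) (j:ℕ) (fun c => s c * padM M c ↑j)]
    simp [Finset.mem_range]
  simp_rw [step1]
  refine Eq.trans (Fin.sum_univ_eq_sum_range
    (fun c : ℕ => if c < m then s c * padM M c c else 0) n) ?_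
  have hsub : range (min m n) ⊆ range n := Finset.range_subset_range.2 (Nat.min_le_right m n)
  rw [← Finset.sum_subset hsub (fun x hx hx' => by rw [if_neg]; simp at hx hx'; omega)]
  exact Finset.sum_congr rfl fun x hx => by rw [if_pos]; simp at hx; omega

lemma sum_ite_le_eq {p N : ℕ} (h : p < N) (f : ℕ → ℝ) :
    ∑ i ∈ range N, (if i ≤ p then f i else 0) = ∑ i ∈ range (p+1), f i := by
  rw [← Finset.sum_subset (Finset.range_subset_range.2 h)
    (fun x _ hx' => by rw [if_neg]; simp at hx'; omega)]
  exact Finset.sum_congr rfl fun x hx => by rw [if_pos]; simp at hx; omega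

lemma sum_ite_ge_eq (i N : ℕ) (f : ℕ → ℝ) :
    ∑ p ∈ range N, (if i ≤ p then f p else 0) = ∑ p ∈ Finset.Ico i N, f p := by
  rw [← Finset.sum_filter]
  congr 1; ext x; simp; omega

lemma telescope {N : ℕ} (t : ℕ → ℝ) {i : ℕ} (hi : i < N) :
    ∑ p ∈ range N, (if i ≤ p then t p - t (p+1) else 0) = t i - t N := by
  rw [sum_ite_ge_eq, Finset.sum_Ico_eq_sum_range]
  have h : ∀ k, t (i + k) - t (i + k + 1) = (fun k => t (i+k)) k - (fun k => t (i+k)) (k+1) := by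
    intro k; simp [Nat.add_assoc]
  simp_rw [h]
  rw [Finset.sum_range_sub' (fun k => t (i+k)) (N - i)]
  congr 2 <;> omega

lemma abel_bound (N : ℕ) (a b : ℕ → ℝ) (c : ℕ → ℕ → ℝ)
    (ha : Antitone a) (ha0 : ∀ i, 0 ≤ a i) (hb : Antitone b) (hb0 : ∀ i, 0 ≤ b i)
    (hc : ∀ p q : ℕ, p < N → q < N →
      ∑ i ∈ range (p+1), ∑ k ∈ range (q+1), c i k ≤ ((min (p+1) (q+1) : ℕ) : ℝ)) :
    ∑ i ∈ range N, ∑ k ∈ range N, a i * (b k * c i k) ≤ ∑ i ∈ range N, a i * b i := by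
  classical
  set tA : ℕ → ℝ := fun p => if p < N then a p else 0 with htA
  set tB : ℕ → ℝ := fun p => if p < N then b p else 0 with htB
  set α : ℕ → ℝ := fun p => tA p - tA (p+1) with hα
  set β : ℕ → ℝ := fun q => tB q - tB (q+1) with hβ
  have hα0 : ∀ p, 0 ≤ α p := by
    intro p
    by_cases h1 : p + 1 < N
    · have h2 : p < N := by omega
      simp only [hα, htA, if_pos h1, if_pos h2, sub_nonneg]
      exact ha (Nat.le_succ p)
    · by_cases h2 : p < N
      · simp only [hα, htA, if_neg h1, if_pos h2, sub_zero]; exact ha0 p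
      · simp only [hα, htA, if_neg h1, if_neg h2, sub_zero]; exact le_refl 0
  have hβ0 : ∀ q, 0 ≤ β q := by
    intro p
    by_cases h1 : p + 1 < N
    · have h2 : p < N := by omega
      simp only [hβ, htB, if_pos h1, if_pos h2, sub_nonneg]
      exact hb (Nat.le_succ p)
    · by_cases h2 : p < N
      · simp only [hβ, htB, if_neg h1, if_pos h2, sub_zero]; exact hb0 p
      · simp only [hβ, htB, if_neg h1, if_neg h2, sub_zero]; exact le_refl 0
  have hrecA : ∀ i, i < N → ∑ p ∈ range N, (if i ≤ p then α p else 0) = a i := by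
    intro i hi
    calc ∑ p ∈ range N, (if i ≤ p then α p else 0) = tA i - tA N := by
          simp only [hα]; exact telescope tA hi
      _ = a i := by simp [htA, hi]
  have hrecB : ∀ i, i < N → ∑ q ∈ range N, (if i ≤ q then β q else 0) = b i := by
    intro i hi
    calc ∑ q ∈ range N, (if i ≤ q then β q else 0) = tB i - tB N := by
          simp only [hβ]; exact telescope tB hi
      _ = b i := by simp [htB, hi]
  -- the LHS in Abel form
  have lhs_eq : ∑ i ∈ range N, ∑ k ∈ range N, a i * (b k * c i k)
      = ∑ p ∈ range N, ∑ q ∈ range N,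
          α p * (β q * ∑ i ∈ range (p+1), ∑ k ∈ range (q+1), c i k) := by
    calc ∑ i ∈ range N, ∑ k ∈ range N, a i * (b k * c i k)
        = ∑ i ∈ range N, ∑ k ∈ range N, ∑ p ∈ range N, ∑ q ∈ range N,
            (if i ≤ p then (if k ≤ q then α p * (β q * c i k) else 0) else 0) := by
          refine Finset.sum_congr rfl fun i hi => Finset.sum_congr rfl fun k hk => ?_
          simp only [Finset.mem_range] at hi hk
          rw [← hrecA i hi, ← hrecB k hk, Finset.sum_mul]
          refine Finset.sum_congr rfl fun p _ => ?_
          rw [Finset.sum_mul, Finset.mul_sum]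
          refine Finset.sum_congr rfl fun q _ => ?_
          split_ifs <;> first | ring1 | (exfalso; omega)
      _ = ∑ i ∈ range N, ∑ p ∈ range N, ∑ k ∈ range N, ∑ q ∈ range N,
            (if i ≤ p then (if k ≤ q then α p * (β q * c i k) else 0) else 0) :=
          Finset.sum_congr rfl fun i _ => Finset.sum_comm
      _ = ∑ p ∈ range N, ∑ i ∈ range N, ∑ k ∈ range N, ∑ q ∈ range N,
            (if i ≤ p then (if k ≤ q then α p * (β q * c i k) else 0) else 0) :=
          Finset.sum_comm
      _ = ∑ p ∈ range N, ∑ i ∈ range N, ∑ q ∈ range N, ∑ k ∈ range N,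
            (if i ≤ p then (if k ≤ q then α p * (β q * c i k) else 0) else 0) :=
          Finset.sum_congr rfl fun p _ => Finset.sum_congr rfl fun i _ => Finset.sum_comm
      _ = ∑ p ∈ range N, ∑ q ∈ range N, ∑ i ∈ range N, ∑ k ∈ range N,
            (if i ≤ p then (if k ≤ q then α p * (β q * c i k) else 0) else 0) :=
          Finset.sum_congr rfl fun p _ => Finset.sum_comm
      _ = ∑ p ∈ range N, ∑ q ∈ range N,
            α p * (β q * ∑ i ∈ range (p+1), ∑ k ∈ range (q+1), c i k) := by
          refine Finset.sum_congr rfl fun p hp => Finset.sum_congr rfl fun q hq => ?_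
          simp only [Finset.mem_range] at hp hq
          calc ∑ i ∈ range N, ∑ k ∈ range N,
                (if i ≤ p then (if k ≤ q then α p * (β q * c i k) else 0) else 0)
              = ∑ i ∈ range N, (if i ≤ p then
                  ∑ k ∈ range N, (if k ≤ q then α p * (β q * c i k) else 0) else 0) := by
                refine Finset.sum_congr rfl fun i _ => ?_
                split_ifs
                · rfl
                · simp
            _ = ∑ i ∈ range (p+1),
                  ∑ k ∈ range N, (if k ≤ q then α p * (β q * c i k) else 0) :=
                sum_ite_le_eq hp _
            _ = ∑ i ∈ range (p+1), ∑ k ∈ range (q+1), α p * (β q * c i k) :=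
                Finset.sum_congr rfl fun i _ => sum_ite_le_eq hq _
            _ = α p * (β q * ∑ i ∈ range (p+1), ∑ k ∈ range (q+1), c i k) := by
                simp_rw [Finset.mul_sum]
  -- the RHS in Abel form
  have rhs_eq : ∑ i ∈ range N, a i * b i
      = ∑ p ∈ range N, ∑ q ∈ range N, α p * (β q * ((min p q + 1 : ℕ) : ℝ)) := by
    calc ∑ i ∈ range N, a i * b i
        = ∑ i ∈ range N, ∑ p ∈ range N, ∑ q ∈ range N,
            (if i ≤ min p q then α p * β q else 0) := by
          refine Finset.sum_congr rfl fun i hi => ?_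
          simp only [Finset.mem_range] at hi
          rw [← hrecA i hi, ← hrecB i hi, Finset.sum_mul]
          refine Finset.sum_congr rfl fun p _ => ?_
          rw [Finset.mul_sum]
          refine Finset.sum_congr rfl fun q _ => ?_
          split_ifs <;> first | ring1 | (exfalso; omega)
      _ = ∑ p ∈ range N, ∑ i ∈ range N, ∑ q ∈ range N,
            (if i ≤ min p q then α p * β q else 0) := Finset.sum_comm
      _ = ∑ p ∈ range N, ∑ q ∈ range N, ∑ i ∈ range N,
            (if i ≤ min p q then α p * β q else 0) :=
          Finset.sum_congr rfl fun p _ => Finset.sum_comm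
      _ = ∑ p ∈ range N, ∑ q ∈ range N, α p * (β q * ((min p q + 1 : ℕ) : ℝ)) := by
          refine Finset.sum_congr rfl fun p hp => Finset.sum_congr rfl fun q hq => ?_
          simp only [Finset.mem_range] at hp hq
          rw [sum_ite_le_eq (show min p q < N by omega) (fun _ => α p * β q)]
          rw [Finset.sum_const, Finset.card_range, nsmul_eq_mul]
          push_cast
          ring
  rw [lhs_eq, rhs_eq]
  refine Finset.sum_le_sum fun p hp => Finset.sum_le_sum fun q hq => ?_
  simp only [Finset.mem_range] at hp hq
  have hS := hc p q hp hq
  rw [Nat.succ_min_succ] at hS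
  have h1 : β q * (∑ i ∈ range (p+1), ∑ k ∈ range (q+1), c i k)
      ≤ β q * ((min p q + 1 : ℕ) : ℝ) := mul_le_mul_of_nonneg_left hS (hβ0 q)
  exact mul_le_mul_of_nonneg_left h1 (hα0 p)

/-- Von Neumann trace inequality: for real `m × n` matrices `A` and `B` with
singular values `σ(A)`, `σ(B)` arranged in non-increasing order (exhibited via
singular value decompositions), `trace (Aᵀ B) ≤ ∑ᵢ σᵢ(A) σᵢ(B)`. -/
theorem stmt_0 {m n : ℕ} (A B : Matrix (Fin m) (Fin n) ℝ)
    (sA sB : ℕ → ℝ)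
    (UA : Matrix (Fin m) (Fin m) ℝ) (VA : Matrix (Fin n) (Fin n) ℝ)
    (UB : Matrix (Fin m) (Fin m) ℝ) (VB : Matrix (Fin n) (Fin n) ℝ)
    (hsA : Antitone sA) (hsA0 : ∀ i, 0 ≤ sA i)
    (hsB : Antitone sB) (hsB0 : ∀ i, 0 ≤ sB i)
    (hUA : UAᵀ * UA = 1) (hVA : VAᵀ * VA = 1)
    (hUB : UBᵀ * UB = 1) (hVB : VBᵀ * VB = 1)
    (hA : A = UA * (Matrix.of fun (i : Fin m) (j : Fin n) =>
      if (i : ℕ) = (j : ℕ) then sA (i : ℕ) else 0) * VAᵀ)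
    (hB : B = UB * (Matrix.of fun (i : Fin m) (j : Fin n) =>
      if (i : ℕ) = (j : ℕ) then sB (i : ℕ) else 0) * VBᵀ) :
    Matrix.trace (Aᵀ * B) ≤ ∑ i ∈ Finset.range (min m n), sA i * sB i := by
  subst hA hB
  set DA : Matrix (Fin m) (Fin n) ℝ := Matrix.of fun (i : Fin m) (j : Fin n) =>
      if (i : ℕ) = (j : ℕ) then sA (i : ℕ) else 0 with hDA
  set DB : Matrix (Fin m) (Fin n) ℝ := Matrix.of fun (i : Fin m) (j : Fin n) =>
      if (i : ℕ) = (j : ℕ) then sB (i : ℕ) else 0 with hDB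
  have hUB' : UB * UBᵀ = 1 := mul_eq_one_comm.mp hUB
  have hVB' : VB * VBᵀ = 1 := mul_eq_one_comm.mp hVB
  have hUo : (UAᵀ * UB) * (UAᵀ * UB)ᵀ = 1 := by
    calc (UAᵀ * UB) * (UAᵀ * UB)ᵀ = UAᵀ * ((UB * UBᵀ) * UA) := by
          simp only [Matrix.transpose_mul, Matrix.transpose_transpose, Matrix.mul_assoc]
      _ = 1 := by rw [hUB', Matrix.one_mul, hUA]
  have hVo : (VAᵀ * VB) * (VAᵀ * VB)ᵀ = 1 := by
    calc (VAᵀ * VB) * (VAᵀ * VB)ᵀ = VAᵀ * ((VB * VBᵀ) * VA) := by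
          simp only [Matrix.transpose_mul, Matrix.transpose_transpose, Matrix.mul_assoc]
      _ = 1 := by rw [hVB', Matrix.one_mul, hVA]
  have e1 : (UA * DA * VAᵀ)ᵀ * (UB * DB * VBᵀ)
      = VA * (DAᵀ * (UAᵀ * (UB * (DB * VBᵀ)))) := by
    simp only [Matrix.transpose_mul, Matrix.transpose_transpose, Matrix.mul_assoc]
  have e2 : (DAᵀ * (UAᵀ * (UB * (DB * VBᵀ)))) * VA
      = DAᵀ * ((UAᵀ * UB) * DB * (VAᵀ * VB)ᵀ) := by
    simp only [Matrix.transpose_mul, Matrix.transpose_transpose, Matrix.mul_assoc]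
  rw [e1, Matrix.trace_mul_comm, e2, hDA, trace_diag_mul sA ((UAᵀ * UB) * DB * (VAᵀ * VB)ᵀ)]
  have entry : ∀ c ∈ range (min m n),
      sA c * padM ((UAᵀ * UB) * DB * (VAᵀ * VB)ᵀ) c c
      = ∑ k ∈ range (min m n),
          sA c * (sB k * (padM (UAᵀ * UB) c k * padM (VAᵀ * VB) c k)) := by
    intro c hc
    simp only [Finset.mem_range] at hc
    have hm : c < m := by omega
    have hn : c < n := by omega
    have hpad : padM ((UAᵀ * UB) * DB * (VAᵀ * VB)ᵀ) c c
        = ((UAᵀ * UB) * DB * (VAᵀ * VB)ᵀ) ⟨c, hm⟩ ⟨c, hn⟩ := by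
      unfold padM; rw [dif_pos ⟨hm, hn⟩]
    rw [hpad, hDB, mid_apply (UAᵀ * UB) (VAᵀ * VB) sB ⟨c, hm⟩ ⟨c, hn⟩, Finset.mul_sum]
  rw [Finset.sum_congr rfl entry]
  exact abel_bound (min m n) sA sB
    (fun i k => padM (UAᵀ * UB) i k * padM (VAᵀ * VB) i k) hsA hsA0 hsB hsB0
    (fun p q _ _ => cs_bound (UAᵀ * UB) (VAᵀ * VB) hUo hVo (p+1) (q+1))
end

section
/- Let 0 < p < 1, λ > 0, and let τ = (2λ(1-p))^{1/(2-p)} + λ p (2λ(1-p))^{(p-1)/(2-p)}. For σᵢ ≥ σⱼ > τ, if δᵢ and δⱼ in ((2λ(1-p))^{1/(2-p)}, ∞) satisfy δᵢ + λp δᵢ^{p-1} = σᵢ and δⱼ + λp δⱼ^{p-1} = σⱼ, then δᵢ ≥ δⱼ. -/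
/-- Order preservation of generalized soft-thresholding: for `0 < p < 1`, `λ > 0`,
threshold `τ = (2λ(1-p))^(1/(2-p)) + λ p (2λ(1-p))^((p-1)/(2-p))`, if
`σᵢ ≥ σⱼ > τ` and `δᵢ, δⱼ` lie in `((2λ(1-p))^(1/(2-p)), ∞)` with
`δᵢ + λ p δᵢ^(p-1) = σᵢ` and `δⱼ + λ p δⱼ^(p-1) = σⱼ`, then `δᵢ ≥ δⱼ`. -/
theorem stmt_3 (p l si sj di dj : ℝ) (hp : 0 < p) (hp1 : p < 1) (hl : 0 < l)
    (htau : (2 * l * (1 - p)) ^ ((1 : ℝ) / (2 - p)) +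
        l * p * (2 * l * (1 - p)) ^ ((p - 1) / (2 - p)) < sj)
    (hij : sj ≤ si)
    (hdi : (2 * l * (1 - p)) ^ ((1 : ℝ) / (2 - p)) < di)
    (hdj : (2 * l * (1 - p)) ^ ((1 : ℝ) / (2 - p)) < dj)
    (heqi : di + l * p * di ^ (p - 1) = si)
    (heqj : dj + l * p * dj ^ (p - 1) = sj) :
    dj ≤ di := by
  set t : ℝ := (2 * l * (1 - p)) ^ ((1 : ℝ) / (2 - p)) with ht_def
  have hbase : (0 : ℝ) < 2 * l * (1 - p) := by nlinarith
  have ht : 0 < t := Real.rpow_pos_of_pos hbase _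
  have h2p : (0 : ℝ) < 2 - p := by linarith
  have htpow : t ^ (2 - p) = 2 * l * (1 - p) := by
    rw [ht_def, ← Real.rpow_mul hbase.le, one_div_mul_cancel h2p.ne', Real.rpow_one]
  have key : StrictMonoOn (fun x : ℝ => x + l * p * x ^ (p - 1)) (Set.Ici t) := by
    apply strictMonoOn_of_deriv_pos (convex_Ici t)
    · apply ContinuousOn.add continuousOn_id
      apply ContinuousOn.mul continuousOn_const
      exact ContinuousOn.rpow_const continuousOn_id
        (fun x hx => Or.inl (ht.trans_le hx).ne')
    · intro x hx
      rw [interior_Ici] at hx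
      have hxt : t < x := hx
      have hx0 : 0 < x := ht.trans hxt
      have hd : HasDerivAt (fun x : ℝ => x + l * p * x ^ (p - 1))
          (1 + l * p * ((p - 1) * x ^ (p - 1 - 1))) x := by
        exact (hasDerivAt_id x).add
          ((Real.hasDerivAt_rpow_const (Or.inl hx0.ne')).const_mul (l * p))
      rw [hd.deriv]
      have hxe : x ^ (2 - p) > 2 * l * (1 - p) := by
        rw [← htpow]
        exact Real.rpow_lt_rpow ht.le hxt h2p
      have hinv : x ^ (p - 1 - 1) = (x ^ (2 - p))⁻¹ := by
        rw [show p - 1 - 1 = -(2 - p) by ring, Real.rpow_neg hx0.le]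
      have hpos : 0 < x ^ (2 - p) := Real.rpow_pos_of_pos hx0 _
      rw [hinv]
      have h1 : l * p * (1 - p) < x ^ (2 - p) := by nlinarith
      have : l * p * (1 - p) * (x ^ (2 - p))⁻¹ < 1 := by
        rw [mul_inv_lt_iff₀ hpos, one_mul]; exact h1
      nlinarith [inv_pos.mpr hpos]
  by_contra hlt
  push_neg at hlt
  have := key (Set.mem_Ici.mpr hdi.le) (Set.mem_Ici.mpr hdj.le) hlt
  simp only [heqi, heqj] at this
  linarith
end

section
/- Let 0 < p < 1, λ > 0, y > 0, and define the generalized soft-thresholding operator T(y) which equals 0 if y ≤ τ (with τ = (2λ(1-p))^{1/(2-p)} + λp(2λ(1-p))^{(p-1)/(2-p)}) and otherwise equals the unique solution x > (2λ(1-p))^{1/(2-p)} of x + λp x^{p-1} = y. Then T is monotone nondecreasing: y₁ ≤ y₂ implies T(y₁) ≤ T(y₂). -/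
open Set

/-- `hca` makes the derivative `1 - c (1 - p) x^(p-2)` positive on `Ioi a`. -/
lemma strictMonoOn_add_mul_rpow_sub_one {c p a : ℝ} (hp : p < 1) (ha : 0 ≤ a)
    (hca : c * (1 - p) ≤ a ^ (2 - p)) :
    StrictMonoOn (fun x : ℝ => x + c * x ^ (p - 1)) (Ioi a) := by
  have hderiv : ∀ x ∈ Ioi a, HasDerivAt (fun x : ℝ => x + c * x ^ (p - 1))
      (1 - c * (1 - p) * x ^ (p - 2)) x := by
    intro x hx
    have hx0 : x ≠ 0 := (ha.trans_lt hx).ne'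
    have h := (hasDerivAt_id' x).add
      ((Real.hasDerivAt_rpow_const (p := p - 1) (Or.inl hx0)).const_mul c)
    rw [show p - 1 - 1 = p - 2 by ring] at h
    exact h.congr_deriv (by ring)
  refine strictMonoOn_of_deriv_pos (convex_Ioi a)
    (fun x hx => (hderiv x hx).continuousAt.continuousWithinAt) fun x hx => ?_
  rw [interior_Ioi] at hx
  rw [(hderiv x hx).deriv]
  have hx0 : 0 < x := ha.trans_lt hx
  have hpos : 0 < x ^ (p - 2) := Real.rpow_pos_of_pos hx0 _
  have hinv : x ^ (p - 2) * x ^ (2 - p) = 1 := by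
    rw [← Real.rpow_add hx0]; norm_num
  have hlt : c * (1 - p) < x ^ (2 - p) :=
    hca.trans_lt (Real.rpow_lt_rpow ha hx (by linarith))
  nlinarith [mul_lt_mul_of_pos_left hlt hpos]

open Classical in
theorem stmt_4_general (p l y₁ y₂ t₁ t₂ : ℝ) (hp1 : p < 1) (hl : 0 < l)
    (hy : y₁ ≤ y₂)
    (ht₁ : if y₁ ≤ (2 * l * (1 - p)) ^ ((1 : ℝ) / (2 - p)) +
        l * p * (2 * l * (1 - p)) ^ ((p - 1) / (2 - p)) then t₁ = 0
      else (2 * l * (1 - p)) ^ ((1 : ℝ) / (2 - p)) < t₁ ∧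
        t₁ + l * p * t₁ ^ (p - 1) = y₁)
    (ht₂ : if y₂ ≤ (2 * l * (1 - p)) ^ ((1 : ℝ) / (2 - p)) +
        l * p * (2 * l * (1 - p)) ^ ((p - 1) / (2 - p)) then t₂ = 0
      else (2 * l * (1 - p)) ^ ((1 : ℝ) / (2 - p)) < t₂ ∧
        t₂ + l * p * t₂ ^ (p - 1) = y₂) :
    t₁ ≤ t₂ := by
  set a := (2 * l * (1 - p)) ^ ((1 : ℝ) / (2 - p)) with ha_def
  have hbase : 0 ≤ 2 * l * (1 - p) := by nlinarith
  have ha : 0 ≤ a := Real.rpow_nonneg hbase _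
  have hmono : StrictMonoOn (fun x : ℝ => x + l * p * x ^ (p - 1)) (Ioi a) := by
    refine strictMonoOn_add_mul_rpow_sub_one hp1 ha ?_
    rw [ha_def, one_div, Real.rpow_inv_rpow hbase (by linarith)]
    nlinarith
  split_ifs at ht₁ ht₂ with h₁ h₂ h₂
  · rw [ht₁, ht₂]
  · rw [ht₁]; exact ha.trans ht₂.1.le
  · exact absurd (hy.trans h₂) h₁
  · refine (hmono.le_iff_le ht₁.1 ht₂.1).mp ?_
    simp only [ht₁.2, ht₂.2, hy]

open Classical in
/-- Monotonicity of the generalized soft-thresholding operator: with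
`τ = (2λ(1-p))^(1/(2-p)) + λ p (2λ(1-p))^((p-1)/(2-p))`, if `t₁ = T(y₁)` and
`t₂ = T(y₂)` (where `T y = 0` for `y ≤ τ`, and otherwise `T y` is the solution
`x > (2λ(1-p))^(1/(2-p))` of `x + λ p x^(p-1) = y`), then `y₁ ≤ y₂ → t₁ ≤ t₂`. -/
theorem stmt_4 (p l y₁ y₂ t₁ t₂ : ℝ) (hp : 0 < p) (hp1 : p < 1) (hl : 0 < l)
    (hy₁ : 0 < y₁) (hy₂ : 0 < y₂) (hy : y₁ ≤ y₂)
    (ht₁ : if y₁ ≤ (2 * l * (1 - p)) ^ ((1 : ℝ) / (2 - p)) +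
        l * p * (2 * l * (1 - p)) ^ ((p - 1) / (2 - p)) then t₁ = 0
      else (2 * l * (1 - p)) ^ ((1 : ℝ) / (2 - p)) < t₁ ∧
        t₁ + l * p * t₁ ^ (p - 1) = y₁)
    (ht₂ : if y₂ ≤ (2 * l * (1 - p)) ^ ((1 : ℝ) / (2 - p)) +
        l * p * (2 * l * (1 - p)) ^ ((p - 1) / (2 - p)) then t₂ = 0
      else (2 * l * (1 - p)) ^ ((1 : ℝ) / (2 - p)) < t₂ ∧
        t₂ + l * p * t₂ ^ (p - 1) = y₂) :
    t₁ ≤ t₂ :=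
  stmt_4_general p l y₁ y₂ t₁ t₂ hp1 hl hy ht₁ ht₂
end

section
/- For 0 < p < 1, λ > 0 and y > τ where τ = (2λ(1-p))^{1/(2-p)} + λp(2λ(1-p))^{(p-1)/(2-p)}, the equation x + λp x^{p-1} = y has a unique solution x in the interval ((2λ(1-p))^{1/(2-p)}, ∞). -/
/-- For `0 < p < 1`, `λ > 0` and `y > τ` (where
`τ = (2λ(1-p))^(1/(2-p)) + λ p (2λ(1-p))^((p-1)/(2-p))`), the equation
`x + λ p x^(p-1) = y` has a unique solution in `((2λ(1-p))^(1/(2-p)), ∞)`. -/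
theorem stmt_5 (p l y : ℝ) (hp : 0 < p) (hp1 : p < 1) (hl : 0 < l)
    (hy : (2 * l * (1 - p)) ^ ((1 : ℝ) / (2 - p)) +
        l * p * (2 * l * (1 - p)) ^ ((p - 1) / (2 - p)) < y) :
    ∃! x : ℝ, x ∈ Set.Ioi ((2 * l * (1 - p)) ^ ((1 : ℝ) / (2 - p))) ∧
      x + l * p * x ^ (p - 1) = y := by
  have h1p : 0 < 1 - p := by linarith
  have h2p : 0 < 2 - p := by linarith
  set c : ℝ := 2 * l * (1 - p) with hc_def
  have hc : 0 < c := by positivity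
  set a : ℝ := c ^ ((1 : ℝ) / (2 - p)) with ha_def
  have ha : 0 < a := Real.rpow_pos_of_pos hc _
  set f : ℝ → ℝ := fun x => x + l * p * x ^ (p - 1) with hf_def
  -- a ^ (2 - p) = c
  have ha2 : a ^ (2 - p) = c := by
    rw [ha_def, ← Real.rpow_mul hc.le, one_div_mul_cancel h2p.ne', Real.rpow_one]
  -- f a equals the threshold τ
  have hfa : f a = a + l * p * c ^ ((p - 1) / (2 - p)) := by
    have : a ^ (p - 1) = c ^ ((p - 1) / (2 - p)) := by
      rw [ha_def, ← Real.rpow_mul hc.le]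
      congr 1
      field_simp
    simp [hf_def, this]
  -- derivative
  have hderiv : ∀ x : ℝ, 0 < x →
      HasDerivAt f (1 + l * p * ((p - 1) * x ^ (p - 2))) x := by
    intro x hx
    have h := (Real.hasDerivAt_rpow_const (p := p - 1) (x := x) (Or.inl hx.ne')).const_mul (l * p)
    have h2 : HasDerivAt f (1 + l * p * ((p - 1) * x ^ (p - 1 - 1))) x :=
      (hasDerivAt_id x).add h
    convert h2 using 3
    ring_nf
  -- derivative positive on Ioi a
  have hderiv_pos : ∀ x : ℝ, a < x → 0 < 1 + l * p * ((p - 1) * x ^ (p - 2)) := by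
    intro x hx
    have hx0 : 0 < x := ha.trans hx
    have hxp : x ^ (p - 2) = (x ^ (2 - p))⁻¹ := by
      rw [← Real.rpow_neg hx0.le]
      congr 1; ring
    have hmono : c < x ^ (2 - p) := by
      rw [← ha2]
      exact Real.rpow_lt_rpow ha.le hx h2p
    have hlp : l * p * (1 - p) < c := by
      rw [hc_def]; nlinarith
    have hxpos : (0:ℝ) < x ^ (2 - p) := Real.rpow_pos_of_pos hx0 _
    have key : l * p * (1 - p) * (x ^ (2 - p))⁻¹ < 1 := by
      rw [mul_inv_lt_iff₀ hxpos, one_mul]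
      linarith
    have : l * p * ((p - 1) * x ^ (p - 2)) = -(l * p * (1 - p) * (x ^ (2 - p))⁻¹) := by
      rw [hxp]; ring
    rw [this]
    linarith
  -- strict monotonicity on Ici a
  have hcont : ContinuousOn f (Set.Ici a) := by
    intro x hx
    exact (hderiv x (lt_of_lt_of_le ha hx)).continuousAt.continuousWithinAt
  have hmono : StrictMonoOn f (Set.Ici a) := by
    apply strictMonoOn_of_deriv_pos (convex_Ici a) hcont
    intro x hx
    rw [interior_Ici] at hx
    rw [(hderiv x (ha.trans hx)).deriv]
    exact hderiv_pos x hx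
  -- f x ≥ x for x > 0
  have hge : ∀ x : ℝ, 0 < x → x ≤ f x := by
    intro x hx
    have : 0 < l * p * x ^ (p - 1) := by positivity
    simp only [hf_def]; linarith
  -- existence via IVT on [a, b]
  set b : ℝ := max (a + 1) y with hb_def
  have hab : a ≤ b := le_trans (by linarith) (le_max_left _ _)
  have hfb : y ≤ f b := le_trans (le_max_right _ _) (hge b (lt_of_lt_of_le ha (le_trans (by linarith) (le_max_left _ _))))
  have hIoc : Set.Ioc (f a) (f b) ⊆ f '' Set.Ioc a b :=
    intermediate_value_Ioc hab (hcont.mono (Set.Icc_subset_Ici_self))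
  have hyIoc : y ∈ Set.Ioc (f a) (f b) := ⟨by rw [hfa]; exact hy, hfb⟩
  obtain ⟨x, hxmem, hxy⟩ := hIoc hyIoc
  refine ⟨x, ⟨hxmem.1, hxy⟩, ?_⟩
  rintro z ⟨hz, hzy⟩
  exact hmono.injOn (Set.mem_Ici.mpr (le_of_lt hz)) (Set.mem_Ici.mpr (le_of_lt hxmem.1))
    (by show z + l * p * z ^ (p - 1) = x + l * p * x ^ (p - 1)
        have hxy' : x + l * p * x ^ (p - 1) = y := hxy
        rw [hzy, hxy'])
end

section
/- Let 0 < p < 1, λ > 0 and τ = (2λ(1-p))^{1/(2-p)} + λp(2λ(1-p))^{(p-1)/(2-p)}. If 0 < y ≤ (2λ(1-p))^{1/(2-p)}, then the global minimizer of g(x) = (1/2)(x-y)² + λx^p over x ≥ 0 is x = 0. -/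
/-!
For `x > 0` the claim is `y ≤ x / 2 + λ x^(p-1)`. With `c = (2λ(1-p))^(1/(2-p))` and `x = c t`
the right side is `c / (2(1-p)) * ((1-p) t + t^(p-1))`, and weighted AM-GM gives
`(1-p) t + t^(p-1) ≥ 2 - p ≥ 2(1-p)`, so it is at least `c ≥ y`.
-/

open Real

theorem one_add_le_mul_add_rpow_neg {q t : ℝ} (hq : 0 ≤ q) (ht : 0 < t) :
    1 + q ≤ q * t + t ^ (-q) := by
  have hq1 : 0 < 1 + q := by linarith
  have amgm := geom_mean_le_arith_mean2_weighted (w₁ := q / (1 + q)) (w₂ := 1 / (1 + q))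
    (by positivity) (by positivity) ht.le (rpow_nonneg ht.le (-q)) (by field_simp; ring)
  have hgeom : t ^ (q / (1 + q)) * (t ^ (-q)) ^ (1 / (1 + q)) = 1 := by
    have hexp : q / (1 + q) + -q * (1 / (1 + q)) = 0 := by ring
    rw [← rpow_mul ht.le, ← rpow_add ht, hexp, rpow_zero]
  rw [hgeom] at amgm
  calc 1 + q ≤ (1 + q) * (q / (1 + q) * t + 1 / (1 + q) * t ^ (-q)) :=
        le_mul_of_one_le_right hq1.le amgm
    _ = q * t + t ^ (-q) := by field_simp

theorem rpow_le_half_add_mul_rpow_sub_one {p l x : ℝ} (hp : 0 ≤ p) (hp1 : p < 1) (hl : 0 < l)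
    (hx : 0 < x) : (2 * l * (1 - p)) ^ ((1 : ℝ) / (2 - p)) ≤ x / 2 + l * x ^ (p - 1) := by
  set c := (2 * l * (1 - p)) ^ ((1 : ℝ) / (2 - p))
  have hq : 0 < 1 - p := by linarith
  have hbase : 0 < 2 * l * (1 - p) := by positivity
  have hc : 0 < c := by positivity
  have hcpow : c ^ (2 - p) = 2 * l * (1 - p) := by
    rw [← rpow_mul hbase.le, one_div_mul_cancel (by linarith), rpow_one]
  have hlc : l * c ^ (p - 1) = c / (2 * (1 - p)) := by
    have : c ^ (p - 1) * c ^ (2 - p) = c := by rw [← rpow_add hc]; norm_num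
    field_simp
    nlinarith
  have hscale : x / 2 + l * x ^ (p - 1)
      = c / (2 * (1 - p)) * ((1 - p) * (x / c) + (x / c) ^ (-(1 - p))) := by
    rw [neg_sub, div_rpow hx.le hc.le, mul_add]
    congr 1
    · field_simp
    · rw [← hlc]
      field_simp
  have key := one_add_le_mul_add_rpow_neg hq.le (div_pos hx hc)
  calc c ≤ c / (2 * (1 - p)) * (1 + (1 - p)) := by
        rw [div_mul_eq_mul_div, le_div_iff₀ (by positivity)]; nlinarith
    _ ≤ _ := by rw [hscale]; gcongr

theorem stmt_6_general (p l y : ℝ) (hp : 0 < p) (hp1 : p < 1) (hl : 0 < l)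
    (hy : y ≤ (2 * l * (1 - p)) ^ ((1 : ℝ) / (2 - p))) :
    ∀ x : ℝ, 0 ≤ x →
      (1 / 2) * ((0 : ℝ) - y) ^ 2 + l * (0 : ℝ) ^ p ≤
        (1 / 2) * (x - y) ^ 2 + l * x ^ p := by
  intro x hx
  rcases hx.eq_or_lt with rfl | hx
  · simp
  have hy' := hy.trans (rpow_le_half_add_mul_rpow_sub_one hp.le hp1 hl hx)
  have hxy : y * x ≤ (x / 2 + l * x ^ (p - 1)) * x := mul_le_mul_of_nonneg_right hy' hx.le
  have hxp : x ^ (p - 1) * x = x ^ p := by rw [← rpow_add_one hx.ne']; norm_num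
  rw [zero_rpow hp.ne']
  nlinarith

/-- For `0 < p < 1`, `λ > 0` and `0 < y ≤ (2λ(1-p))^(1/(2-p))`, the global
minimizer of `g x = (1/2)(x-y)² + λ x^p` over `x ≥ 0` is `x = 0`. -/
theorem stmt_6 (p l y : ℝ) (hp : 0 < p) (hp1 : p < 1) (hl : 0 < l)
    (hy0 : 0 < y) (hy : y ≤ (2 * l * (1 - p)) ^ ((1 : ℝ) / (2 - p))) :
    ∀ x : ℝ, 0 ≤ x →
      (1 / 2) * ((0 : ℝ) - y) ^ 2 + l * (0 : ℝ) ^ p ≤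
        (1 / 2) * (x - y) ^ 2 + l * x ^ p :=
  stmt_6_general p l y hp hp1 hl hy
end

section
/- Let A ∈ ℝ^{m×n} with full SVD A = U Σ Vᵀ, let Δ be a rectangular diagonal matrix with nonnegative diagonal entries arranged in non-increasing order, and set M = Q Δ Rᵀ for arbitrary orthogonal matrices Q ∈ O(m), R ∈ O(n). Then ‖M − A‖_F² ≥ ‖Δ − Σ‖_F², with equality when Q = U and R = V. -/
/-!
Expanding the squares, `‖M - A‖² = ‖Δ‖² + ‖Σ‖² - 2 tr (Δᵀ P Σ G)` with `P = Qᵀ U` and `G = Vᵀ R`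
orthogonal, so everything reduces to the von Neumann bound `tr (Δᵀ P Σ G) ≤ tr (Δᵀ Σ)`.
Since `Δ` and `Σ` are entrywise nonnegative, `2 P_ia G_bj ≤ P_ia² + G_bj²` bounds `2 tr (Δᵀ P Σ G)`
by two bilinear forms: one pairs the row sums of `Δ` and `Σ` through `(P_ia²)`, the other the
column sums through `(G_bj²)ᵀ`. Both matrices of squares are doubly stochastic, hence (Birkhoff)
convex combinations of permutation matrices, and the row (column) sums of `Δ` and `Σ` are
non-increasing, so the rearrangement inequality bounds each form by the diagonal pairing, which is
`tr (Δᵀ Σ)` in both cases.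
-/

open Matrix

section DoublyStochastic
variable {n : Type*} [Fintype n] [DecidableEq n]

theorem dotProduct_mulVec_le_of_mem_doublyStochastic {B : Matrix n n ℝ}
    (hB : B ∈ doublyStochastic ℝ n) {f g : n → ℝ} (hfg : Monovary f g) :
    f ⬝ᵥ B *ᵥ g ≤ f ⬝ᵥ g := by
  have hconv : Convex ℝ {C : Matrix n n ℝ | f ⬝ᵥ C *ᵥ g ≤ f ⬝ᵥ g} :=
    convex_halfSpace_le ⟨fun C D => by simp only [add_mulVec, dotProduct_add],
      fun c C => by simp only [smul_mulVec, dotProduct_smul]⟩ _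
  rw [← SetLike.mem_coe, doublyStochastic_eq_convexHull_permMatrix] at hB
  refine convexHull_min ?_ hconv hB
  rintro _ ⟨σ, rfl⟩
  simpa [permMatrix_mulVec, dotProduct] using hfg.sum_mul_comp_perm_le_sum_mul

theorem map_sq_mem_doublyStochastic {P : Matrix n n ℝ} (hP : Pᵀ * P = 1) :
    P.map (· ^ 2) ∈ doublyStochastic ℝ n := by
  have hP' : P * Pᵀ = 1 := mul_eq_one_comm.mp hP
  refine mem_doublyStochastic_iff_sum.mpr ⟨fun i j => sq_nonneg _, fun i => ?_, fun j => ?_⟩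
  · simpa [mul_apply, sq] using congr_fun₂ hP' i i
  · simpa [mul_apply, sq] using congr_fun₂ hP j j
end DoublyStochastic

theorem transpose_mul_transpose_mul_self_eq_one {n : Type*} [Fintype n] [DecidableEq n]
    {Q U : Matrix n n ℝ} (hQ : Qᵀ * Q = 1) (hU : Uᵀ * U = 1) :
    (Qᵀ * U)ᵀ * (Qᵀ * U) = 1 := by
  rw [transpose_mul, transpose_transpose, Matrix.mul_assoc, ← Matrix.mul_assoc Q,
    mul_eq_one_comm.mp hQ, Matrix.one_mul, hU]

section Trace
variable {m n : Type*} [Fintype m] [Fintype n]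

theorem trace_transpose_mul_eq_sum {R : Type*} [CommSemiring R] (X Y : Matrix m n R) :
    trace (Xᵀ * Y) = ∑ i, ∑ j, X i j * Y i j := by
  rw [Finset.sum_comm]
  simp [trace, mul_apply]

theorem sum_sq_eq_trace (X : Matrix m n ℝ) : ∑ i, ∑ j, X i j ^ 2 = trace (Xᵀ * X) := by
  simp [trace_transpose_mul_eq_sum, sq]

theorem sum_sq_sub_eq (X Y : Matrix m n ℝ) :
    ∑ i, ∑ j, (X - Y) i j ^ 2 = trace (Xᵀ * X) + trace (Yᵀ * Y) - 2 * trace (Xᵀ * Y) := by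
  simp only [trace_transpose_mul_eq_sum, Finset.mul_sum, ← Finset.sum_add_distrib,
    ← Finset.sum_sub_distrib]
  refine Fintype.sum_congr _ _ fun i => Fintype.sum_congr _ _ fun j => ?_
  rw [Matrix.sub_apply]
  ring

theorem trace_transpose_mul_mul_transpose (Q U : Matrix m m ℝ) (R V : Matrix n n ℝ)
    (X Y : Matrix m n ℝ) :
    trace ((Q * X * Rᵀ)ᵀ * (U * Y * Vᵀ)) = trace (Xᵀ * (Qᵀ * U * Y * (Vᵀ * R))) := by
  simp only [transpose_mul, transpose_transpose, Matrix.mul_assoc]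
  rw [trace_mul_comm]
  simp only [Matrix.mul_assoc]

theorem trace_transpose_mul_of_orthogonal [DecidableEq m] [DecidableEq n] {Q : Matrix m m ℝ}
    {R : Matrix n n ℝ} (hQ : Qᵀ * Q = 1) (hR : Rᵀ * R = 1) (X Y : Matrix m n ℝ) :
    trace ((Q * X * Rᵀ)ᵀ * (Q * Y * Rᵀ)) = trace (Xᵀ * Y) := by
  rw [trace_transpose_mul_mul_transpose, hQ, hR, Matrix.one_mul, Matrix.mul_one]

theorem two_mul_trace_transpose_mul_mul_mul_le {X Y : Matrix m n ℝ}
    (hX : ∀ i j, 0 ≤ X i j) (hY : ∀ i j, 0 ≤ Y i j) (P : Matrix m m ℝ) (G : Matrix n n ℝ) :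
    2 * trace (Xᵀ * (P * Y * G)) ≤
      (X *ᵥ 1) ⬝ᵥ P.map (· ^ 2) *ᵥ (Y *ᵥ 1) + (1 ᵥ* X) ⬝ᵥ (G.map (· ^ 2))ᵀ *ᵥ (1 ᵥ* Y) := by
  have htrace : trace (Xᵀ * (P * Y * G)) =
      ∑ i, ∑ j, ∑ b, ∑ a, X i j * (P i a * Y a b * G b j) := by
    simp only [trace_transpose_mul_eq_sum, mul_apply, Finset.sum_mul]
    simp only [Finset.mul_sum]
  have hrows : (X *ᵥ 1) ⬝ᵥ P.map (· ^ 2) *ᵥ (Y *ᵥ 1) =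
      ∑ i, ∑ j, ∑ b, ∑ a, X i j * (P i a ^ 2 * Y a b) := by
    simp only [dotProduct, mulVec, map_apply, Pi.one_apply, mul_one, Finset.sum_mul]
    simp only [Finset.mul_sum]
    exact Fintype.sum_congr _ _ fun i => Fintype.sum_congr _ _ fun j => Finset.sum_comm
  have hcols : (1 ᵥ* X) ⬝ᵥ (G.map (· ^ 2))ᵀ *ᵥ (1 ᵥ* Y) =
      ∑ i, ∑ j, ∑ b, ∑ a, X i j * (G b j ^ 2 * Y a b) := by
    simp only [dotProduct, mulVec, vecMul, map_apply, transpose_apply, Pi.one_apply, one_mul,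
      Finset.sum_mul]
    simp only [Finset.mul_sum]
    exact Finset.sum_comm
  rw [htrace, hrows, hcols]
  simp only [Finset.mul_sum, ← Finset.sum_add_distrib]
  gcongr with i _ j _ b _ a _
  nlinarith [two_mul_le_add_sq (P i a) (G b j), mul_nonneg (hX i j) (hY a b)]

end Trace

def rectDiag (m n : ℕ) (d : ℕ → ℝ) : Matrix (Fin m) (Fin n) ℝ :=
  of fun i j => if (i : ℕ) = j then d i else 0

theorem Fin.sum_ite_val_eq (N k : ℕ) (f : ℕ → ℝ) :
    ∑ j : Fin N, (if k = (j : ℕ) then f j else 0) = if k < N then f k else 0 := by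
  rw [Fin.sum_univ_eq_sum_range (fun j => if k = j then f j else 0), Finset.sum_ite_eq]
  simp

theorem antitone_fin_ite_lt {d : ℕ → ℝ} (hd : Antitone d) (hd0 : ∀ i, 0 ≤ d i) (N k : ℕ) :
    Antitone fun i : Fin k => if (i : ℕ) < N then d i else 0 := by
  intro i j hij
  dsimp only
  split_ifs with hj hi hi
  · exact hd hij
  · exact absurd (lt_of_le_of_lt (Fin.val_le_of_le hij) hj) hi
  · exact hd0 i
  · rfl

section rectDiag
variable {m n : ℕ} (d s : ℕ → ℝ)

theorem rectDiag_nonneg (hd0 : ∀ i, 0 ≤ d i) (i : Fin m) (j : Fin n) :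
    0 ≤ rectDiag m n d i j := by
  simp only [rectDiag, of_apply]
  split_ifs
  exacts [hd0 i, le_rfl]

theorem sum_rectDiag_row (i : Fin m) :
    ∑ j, rectDiag m n d i j = if (i : ℕ) < n then d i else 0 := by
  simpa [rectDiag] using Fin.sum_ite_val_eq n i (fun _ => d i)

theorem sum_rectDiag_col (j : Fin n) :
    ∑ i, rectDiag m n d i j = if (j : ℕ) < m then d j else 0 := by
  simpa [rectDiag, eq_comm (a := ((_ : Fin m) : ℕ))] using Fin.sum_ite_val_eq m j d

theorem rectDiag_mulVec_one :
    rectDiag m n d *ᵥ 1 = fun i : Fin m => if (i : ℕ) < n then d i else 0 := by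
  ext i
  simp [mulVec, dotProduct, sum_rectDiag_row]

theorem one_vecMul_rectDiag :
    1 ᵥ* rectDiag m n d = fun j : Fin n => if (j : ℕ) < m then d j else 0 := by
  ext j
  simp [vecMul, dotProduct, sum_rectDiag_col]

theorem rectDiag_apply_mul_rectDiag_apply (i : Fin m) (j : Fin n) :
    rectDiag m n d i j * rectDiag m n s i j = rectDiag m n (d * s) i j := by
  simp only [rectDiag, of_apply, ite_zero_mul_ite_zero, and_self, Pi.mul_apply]

theorem trace_transpose_rectDiag_mul_rectDiag_eq_mulVec :
    trace ((rectDiag m n d)ᵀ * rectDiag m n s) =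
      (rectDiag m n d *ᵥ 1) ⬝ᵥ (rectDiag m n s *ᵥ 1) := by
  simp only [trace_transpose_mul_eq_sum, rectDiag_apply_mul_rectDiag_apply, sum_rectDiag_row,
    rectDiag_mulVec_one, dotProduct, ite_zero_mul_ite_zero, and_self, Pi.mul_apply]

theorem trace_transpose_rectDiag_mul_rectDiag_eq_vecMul :
    trace ((rectDiag m n d)ᵀ * rectDiag m n s) =
      (1 ᵥ* rectDiag m n d) ⬝ᵥ (1 ᵥ* rectDiag m n s) := by
  rw [trace_transpose_mul_eq_sum, Finset.sum_comm]
  simp only [rectDiag_apply_mul_rectDiag_apply, sum_rectDiag_col, one_vecMul_rectDiag,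
    dotProduct, ite_zero_mul_ite_zero, and_self, Pi.mul_apply]

variable {d s}

theorem trace_transpose_rectDiag_mul_le {P : Matrix (Fin m) (Fin m) ℝ}
    {G : Matrix (Fin n) (Fin n) ℝ} (hP : Pᵀ * P = 1) (hG : Gᵀ * G = 1)
    (hd : Antitone d) (hd0 : ∀ i, 0 ≤ d i) (hs : Antitone s) (hs0 : ∀ i, 0 ≤ s i) :
    trace ((rectDiag m n d)ᵀ * (P * rectDiag m n s * G)) ≤
      trace ((rectDiag m n d)ᵀ * rectDiag m n s) := by
  have hrow := dotProduct_mulVec_le_of_mem_doublyStochastic (map_sq_mem_doublyStochastic hP)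
    ((antitone_fin_ite_lt hd hd0 n m).monovary (antitone_fin_ite_lt hs hs0 n m))
  have hcol := dotProduct_mulVec_le_of_mem_doublyStochastic
    (transpose_mem_doublyStochastic_iff.mpr (map_sq_mem_doublyStochastic hG))
    ((antitone_fin_ite_lt hd hd0 m n).monovary (antitone_fin_ite_lt hs hs0 m n))
  rw [← rectDiag_mulVec_one, ← rectDiag_mulVec_one] at hrow
  rw [← one_vecMul_rectDiag, ← one_vecMul_rectDiag] at hcol
  have hsplit := two_mul_trace_transpose_mul_mul_mul_le (rectDiag_nonneg d hd0) (rectDiag_nonneg s hs0)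
    P G
  linarith [trace_transpose_rectDiag_mul_rectDiag_eq_mulVec (m := m) (n := n) d s,
    trace_transpose_rectDiag_mul_rectDiag_eq_vecMul (m := m) (n := n) d s]

end rectDiag

/-- Let `A = U Σ Vᵀ` be a full SVD of `A ∈ ℝ^{m×n}` (with non-increasing
nonnegative singular values on the rectangular diagonal of `Σ`), let `Δ` be a
rectangular diagonal matrix with nonnegative diagonal entries arranged in
non-increasing order, and `M = Q Δ Rᵀ` for orthogonal `Q`, `R`. Then
`‖M - A‖_F² ≥ ‖Δ - Σ‖_F²`, with equality when `Q = U` and `R = V`. -/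
theorem stmt_9 {m n : ℕ} (A M : Matrix (Fin m) (Fin n) ℝ)
    (s d : ℕ → ℝ)
    (U Q : Matrix (Fin m) (Fin m) ℝ) (V R : Matrix (Fin n) (Fin n) ℝ)
    (hs : Antitone s) (hs0 : ∀ i, 0 ≤ s i)
    (hd : Antitone d) (hd0 : ∀ i, 0 ≤ d i)
    (hU : Uᵀ * U = 1) (hV : Vᵀ * V = 1)
    (hQ : Qᵀ * Q = 1) (hR : Rᵀ * R = 1)
    (hA : A = U * (Matrix.of fun (i : Fin m) (j : Fin n) =>
      if (i : ℕ) = (j : ℕ) then s (i : ℕ) else 0) * Vᵀ)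
    (hM : M = Q * (Matrix.of fun (i : Fin m) (j : Fin n) =>
      if (i : ℕ) = (j : ℕ) then d (i : ℕ) else 0) * Rᵀ) :
    (∑ i : Fin m, ∑ j : Fin n,
        (((Matrix.of fun (i : Fin m) (j : Fin n) =>
            if (i : ℕ) = (j : ℕ) then d (i : ℕ) else 0) -
          (Matrix.of fun (i : Fin m) (j : Fin n) =>
            if (i : ℕ) = (j : ℕ) then s (i : ℕ) else 0)) i j) ^ 2 ≤
      ∑ i : Fin m, ∑ j : Fin n, ((M - A) i j) ^ 2) ∧
    (Q = U → R = V →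
      ∑ i : Fin m, ∑ j : Fin n, ((M - A) i j) ^ 2 =
        ∑ i : Fin m, ∑ j : Fin n,
          (((Matrix.of fun (i : Fin m) (j : Fin n) =>
              if (i : ℕ) = (j : ℕ) then d (i : ℕ) else 0) -
            (Matrix.of fun (i : Fin m) (j : Fin n) =>
              if (i : ℕ) = (j : ℕ) then s (i : ℕ) else 0)) i j) ^ 2) := by
  simp only [← rectDiag.eq_1] at hA hM ⊢
  subst hA hM
  constructor
  · rw [sum_sq_sub_eq, sum_sq_sub_eq, trace_transpose_mul_of_orthogonal hQ hR,
      trace_transpose_mul_of_orthogonal hU hV, trace_transpose_mul_mul_transpose]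
    have hvonNeumann := trace_transpose_rectDiag_mul_le (transpose_mul_transpose_mul_self_eq_one hQ hU)
      (transpose_mul_transpose_mul_self_eq_one hV hR) hd hd0 hs hs0
    linarith
  · rintro rfl rfl
    rw [← Matrix.sub_mul, ← Matrix.mul_sub, sum_sq_eq_trace, sum_sq_eq_trace,
      trace_transpose_mul_of_orthogonal hQ hR]
end

section
/- For 0 < p < 1, λ > 0 and y > τ (τ the GST threshold), the fixed-point iteration x^{(k+1)} = y − λp(x^{(k)})^{p−1} initialized at x^{(0)} = y remains in the interval [(2λ(1-p))^{1/(2-p)}, y] for all k ≥ 0. -/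
/-- Invariance of the GST fixed-point iteration: for `0 < p < 1`, `λ > 0` and
`y > τ`, the iteration `x₀ = y`, `x_{k+1} = y - λ p x_k^(p-1)` stays in the
interval `[(2λ(1-p))^(1/(2-p)), y]` for all `k`. -/
theorem stmt_17 (p l y : ℝ) (hp : 0 < p) (hp1 : p < 1) (hl : 0 < l)
    (hy : (2 * l * (1 - p)) ^ ((1 : ℝ) / (2 - p)) +
        l * p * (2 * l * (1 - p)) ^ ((p - 1) / (2 - p)) < y)
    (x : ℕ → ℝ) (hx0 : x 0 = y)
    (hrec : ∀ k : ℕ, x (k + 1) = y - l * p * x k ^ (p - 1)) :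
    ∀ k : ℕ, (2 * l * (1 - p)) ^ ((1 : ℝ) / (2 - p)) ≤ x k ∧ x k ≤ y := by
  set A := 2 * l * (1 - p) with hA
  have hApos : 0 < A := by rw [hA]; nlinarith
  set β := A ^ ((1 : ℝ) / (2 - p)) with hβ
  have hβpos : 0 < β := Real.rpow_pos_of_pos hApos _
  have hβp : β ^ (p - 1) = A ^ ((p - 1) / (2 - p)) := by
    rw [hβ, ← Real.rpow_mul hApos.le]
    congr 1
    have h2p : (2 : ℝ) - p ≠ 0 := by linarith
    field_simp
  have hterm : 0 < l * p * β ^ (p - 1) := by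
    have := Real.rpow_pos_of_pos hβpos (p - 1)
    positivity
  intro k
  induction k with
  | zero =>
    refine ⟨?_, le_of_eq hx0⟩
    rw [hx0]
    nlinarith [hy, hterm, hβp]
  | succ n ih =>
    obtain ⟨h1, h2⟩ := ih
    have hxn : 0 < x n := lt_of_lt_of_le hβpos h1
    have hmono : x n ^ (p - 1) ≤ β ^ (p - 1) :=
      Real.rpow_le_rpow_of_nonpos hβpos h1 (by linarith)
    have hpow : 0 < x n ^ (p - 1) := Real.rpow_pos_of_pos hxn _
    constructor
    · rw [hrec]
      nlinarith [hy, hβp, mul_le_mul_of_nonneg_left hmono (by positivity : (0:ℝ) ≤ l * p)]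
    · rw [hrec]
      nlinarith [mul_pos (mul_pos hl hp) hpow]
end
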